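/- Let L be a complete lattice which is finitely spatial (every element is a join of join-irreducible elements), and suppose Cen(L) is a complete atomistic sublattice of L. Then L is totally decomposable. -/

import Mathlib

universe u

/-- An element `a` of a lattice is *neutral* if every triple `{a, x, y}`
generates a distributive sublattice; we use the standard equational
characterization. -/
def IsNeutral {L : Type*} [Lattice L] (a : L) : Prop :=
  ∀ x y : L, (a ⊔ x) ⊓ (a ⊔ y) ⊓ (x ⊔ y) = (a ⊓ x) ⊔ (a ⊓ y) ⊔ (x ⊓ y)

/-- An element of a bounded lattice is *central* if it is neutral and complemented. -/
def IsCentral {L : Type*} [Lattice L] [BoundedOrder L] (a : L) : Prop :=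
  IsNeutral a ∧ ∃ b : L, a ⊓ b = ⊥ ∧ a ⊔ b = ⊤

/-- `a` is an atom of the center `Cen L`. -/
def IsCenterAtom {L : Type*} [Lattice L] [BoundedOrder L] (a : L) : Prop :=
  IsCentral a ∧ a ≠ ⊥ ∧ ∀ b : L, IsCentral b → b < a → b = ⊥

/-- A bounded lattice is *directly indecomposable* if whenever it is isomorphic to a
product of two bounded lattices, one of the factors is trivial. -/
def DirectlyIndecomposable (M : Type u) [Lattice M] [BoundedOrder M] : Prop :=
  ∀ A B : BddLat.{u}, Nonempty (M ≃o ↥A × ↥B) → Subsingleton ↥A ∨ Subsingleton ↥B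

/-- A bounded lattice is *totally decomposable* if it is isomorphic to a direct product
of directly indecomposable lattices. -/
def TotallyDecomposable (M : Type u) [Lattice M] [BoundedOrder M] : Prop :=
  ∃ (ι : Type u) (F : ι → BddLat.{u}),
    (∀ i, DirectlyIndecomposable ↥(F i)) ∧ Nonempty (M ≃o ∀ i, ↥(F i))

/-! A join-irreducible `p` lies below an atom of the center: the meet of all central
elements above `p` is central, and it is an atom because `p = (p ⊓ c) ⊔ (p ⊓ c')` forces `p`
under `c` or under its complement `c'` for every central `c`. Distinct center atoms are
disjoint, so `x ↦ (x ⊓ c)_c` maps `L` isomorphically onto `∏_c [⊥, c]`: it is injective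
because `x` is the join of its join-irreducibles, each of which lies under some atom `c`, and
surjective because each `c` is neutral. Finally `[⊥, c]` is directly indecomposable, since a
splitting of it produces a central element of `[⊥, c]`, which is central in `L`, hence `⊥`
or `c`. -/

open Function

section Neutral
variable {L : Type*} [Lattice L] {a b x : L}

lemma isNeutral_bot [OrderBot L] : IsNeutral (⊥ : L) := fun x y => by
  simp only [bot_sup_eq, bot_inf_eq]
  exact inf_eq_left.2 (le_sup_of_le_left inf_le_left)

lemma isNeutral_top [OrderTop L] : IsNeutral (⊤ : L) := fun x y => by
  simp only [top_sup_eq, top_inf_eq]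
  exact (sup_eq_left.2 (le_sup_of_le_left inf_le_left)).symm

lemma IsNeutral.inf_sup_of_le (ha : IsNeutral a) (hx : x ≤ a) (t : L) :
    a ⊓ (x ⊔ t) = x ⊔ a ⊓ t := by
  have h := ha x t
  rw [sup_eq_left.2 hx, inf_eq_left.2 (le_sup_left : a ≤ a ⊔ t), inf_eq_right.2 hx] at h
  rw [h, sup_eq_left.2 (le_sup_of_le_left inf_le_left)]

lemma IsNeutral.le_of_inf_eq_of_sup_eq {y : L} (ha : IsNeutral a) (hinf : a ⊓ x = a ⊓ y)
    (hsup : a ⊔ x = a ⊔ y) : x ≤ y :=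
  calc x ≤ (a ⊔ x) ⊓ (a ⊔ y) ⊓ (x ⊔ y) :=
        le_inf (le_inf le_sup_right (le_sup_right.trans hsup.le)) le_sup_left
    _ = a ⊓ y ⊔ a ⊓ y ⊔ x ⊓ y := by rw [ha x y, hinf]
    _ ≤ y := sup_le (sup_le inf_le_right inf_le_right) inf_le_right

lemma IsNeutral.eq_of_inf_eq_of_sup_eq {y : L} (ha : IsNeutral a) (hinf : a ⊓ x = a ⊓ y)
    (hsup : a ⊔ x = a ⊔ y) : x = y :=
  (ha.le_of_inf_eq_of_sup_eq hinf hsup).antisymm (ha.le_of_inf_eq_of_sup_eq hinf.symm hsup.symm)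

lemma IsNeutral.eq_inf_sup_inf [BoundedOrder L] (ha : IsNeutral a) (hab : IsCompl a b) (x : L) :
    x = x ⊓ a ⊔ x ⊓ b := by
  refine le_antisymm ?_ (sup_le inf_le_left inf_le_left)
  calc x ≤ (a ⊔ x) ⊓ (a ⊔ b) ⊓ (x ⊔ b) := by
        rw [hab.sup_eq_top, inf_top_eq]; exact le_inf le_sup_right le_sup_left
    _ = x ⊓ a ⊔ x ⊓ b := by rw [ha x b, hab.inf_eq_bot, sup_bot_eq, inf_comm a]

lemma IsNeutral.map {M N : Type*} [Lattice M] [Lattice N] (e : M ≃o N) {a : M}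
    (ha : IsNeutral a) : IsNeutral (e a) := by
  intro x y
  obtain ⟨x, rfl⟩ := e.surjective x
  obtain ⟨y, rfl⟩ := e.surjective y
  simp only [← OrderIso.map_sup, ← OrderIso.map_inf]
  exact congrArg e (ha x y)

lemma IsNeutral.prod {M N : Type*} [Lattice M] [Lattice N] {a : M} {b : N}
    (ha : IsNeutral a) (hb : IsNeutral b) : IsNeutral (a, b) := fun x y =>
  Prod.ext (ha x.1 y.1) (hb x.2 y.2)

def IsNeutral.orderIsoIicProdIic [BoundedOrder L] (ha : IsNeutral a) (hab : IsCompl a b) :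
    L ≃o Set.Iic a × Set.Iic b where
  toFun x := (⟨x ⊓ a, inf_le_right⟩, ⟨x ⊓ b, inf_le_right⟩)
  invFun p := (p.1 : L) ⊔ p.2
  left_inv x := (ha.eq_inf_sup_inf hab x).symm
  right_inv := by
    rintro ⟨⟨s, hs⟩, ⟨t, ht⟩⟩
    have hat : a ⊓ t = ⊥ := le_bot_iff.1 (hab.inf_eq_bot ▸ inf_le_inf_left a ht)
    have hfst : (s ⊔ t) ⊓ a = s := by rw [inf_comm, ha.inf_sup_of_le hs, hat, sup_bot_eq]
    have hsnd : (s ⊔ t) ⊓ b = t := by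
      refine ha.eq_of_inf_eq_of_sup_eq ?_ ?_
      · rw [hat, ← le_bot_iff, ← hab.inf_eq_bot]
        exact inf_le_inf_left a inf_le_right
      · refine le_antisymm (sup_le le_sup_left ?_) (sup_le le_sup_left ?_)
        · exact inf_le_left.trans (sup_le_sup_right hs t)
        · exact le_sup_of_le_right (le_inf le_sup_right ht)
    exact Prod.ext (Subtype.ext hfst) (Subtype.ext hsnd)
  map_rel_iff' {x y} := by
    refine ⟨fun h => ?_, fun h => ⟨inf_le_inf_right a h, inf_le_inf_right b h⟩⟩
    calc x = x ⊓ a ⊔ x ⊓ b := ha.eq_inf_sup_inf hab x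
      _ ≤ y ⊓ a ⊔ y ⊓ b := sup_le_sup h.1 h.2
      _ = y := (ha.eq_inf_sup_inf hab y).symm

end Neutral

section Central
variable {L : Type*} [Lattice L] [BoundedOrder L] {a b u : L}

lemma IsCentral.exists_isCompl (ha : IsCentral a) : ∃ b, IsCompl a b :=
  let ⟨b, hinf, hsup⟩ := ha.2
  ⟨b, .of_eq hinf hsup⟩

lemma IsNeutral.isCentral (ha : IsNeutral a) (hab : IsCompl a b) : IsCentral a :=
  ⟨ha, b, hab.inf_eq_bot, hab.sup_eq_top⟩

lemma isCentral_bot : IsCentral (⊥ : L) := isNeutral_bot.isCentral isCompl_bot_top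

lemma isCentral_top : IsCentral (⊤ : L) := isNeutral_top.isCentral isCompl_top_bot

lemma IsCentral.map {M : Type*} [Lattice M] [BoundedOrder M] (e : L ≃o M) (ha : IsCentral a) :
    IsCentral (e a) :=
  let ⟨_, hab⟩ := ha.exists_isCompl
  (ha.1.map e).isCentral (e.isCompl hab)

lemma IsCentral.prod {M : Type*} [Lattice M] [BoundedOrder M] {c : M} (ha : IsCentral a)
    (hc : IsCentral c) : IsCentral (a, c) :=
  let ⟨b, hab⟩ := ha.exists_isCompl
  let ⟨d, hcd⟩ := hc.exists_isCompl
  (ha.1.prod hc.1).isCentral (b := (b, d)) (Prod.isCompl_iff.2 ⟨hab, hcd⟩)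

lemma IsCompl.isCentral_right (hab : IsCompl a b) (ha : IsCentral a) : IsCentral b := by
  have hb : (ha.1.orderIsoIicProdIic hab).symm (⊥, ⊤) = b := by
    simp [IsNeutral.orderIsoIicProdIic]
  exact hb ▸ (isCentral_bot.prod isCentral_top).map _

lemma IsCentral.coe_of_Iic (hu : IsCentral u) {x : Set.Iic u} (hx : IsCentral x) :
    IsCentral (x : L) := by
  obtain ⟨v, huv⟩ := hu.exists_isCompl
  obtain ⟨y, hxy⟩ := hx.exists_isCompl
  obtain ⟨hxy_disj, hxy_sup⟩ := Set.Iic.isCompl_iff.1 hxy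
  have hx_neutral : IsNeutral (x : L) := by
    have hx_eq : (hu.1.orderIsoIicProdIic huv).symm (x, ⊥) = (x : L) := by
      simp [IsNeutral.orderIsoIicProdIic]
    exact hx_eq ▸ (hx.1.prod isNeutral_bot).map _
  have huyv : u ⊓ ((y : L) ⊔ v) = y := by
    rw [hu.1.inf_sup_of_le y.2, huv.inf_eq_bot, sup_bot_eq]
  refine hx_neutral.isCentral (b := y ⊔ v) (.of_eq ?_ ?_)
  · rw [← le_bot_iff, ← disjoint_iff.1 hxy_disj]
    calc (x : L) ⊓ ((y : L) ⊔ v) ≤ (x : L) ⊓ (u ⊓ ((y : L) ⊔ v)) :=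
          le_inf inf_le_left (inf_le_inf_right _ x.2)
      _ = (x : L) ⊓ y := by rw [huyv]
  · rw [← sup_assoc, hxy_sup, huv.sup_eq_top]

lemma IsCenterAtom.eq_bot_or_eq_top_of_isCentral (hu : IsCenterAtom u) {x : Set.Iic u}
    (hx : IsCentral x) : x = ⊥ ∨ x = ⊤ := by
  refine (eq_or_lt_of_le x.2).symm.imp (fun hlt => ?_) Subtype.ext
  exact Subtype.ext (hu.2.2 _ (hu.1.coe_of_Iic hx) hlt)

lemma IsCenterAtom.disjoint {v : L} (hu : IsCenterAtom u) (hv : IsCenterAtom v) (huv : u ≠ v)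
    (hinf : IsCentral (u ⊓ v)) : Disjoint u v := by
  rw [disjoint_iff]
  refine (eq_or_lt_of_le inf_le_left).elim (fun heq => ?_) (hu.2.2 _ hinf)
  exact absurd (hv.2.2 u hu.1 ((inf_eq_left.1 heq).lt_of_ne huv)) hu.2.1

end Central

lemma directlyIndecomposable_of_isCentral {M : Type u} [Lattice M] [BoundedOrder M]
    (h : ∀ a : M, IsCentral a → a = ⊥ ∨ a = ⊤) : DirectlyIndecomposable M := by
  rintro A B ⟨e⟩
  have hcen : IsCentral (e.symm (⊤, ⊥)) := (isCentral_top.prod isCentral_bot).map e.symm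
  rcases h _ hcen with hbot | htop
  · rw [map_eq_bot_iff, Prod.ext_iff] at hbot
    exact .inl (subsingleton_of_bot_eq_top hbot.1.symm)
  · rw [map_eq_top_iff, Prod.ext_iff] at htop
    exact .inr (subsingleton_of_bot_eq_top htop.2)

section Complete
variable {L : Type*} [CompleteLattice L]

lemma iSup_inf_eq_of_isCentral {ι : Type*} {c : ι → L} (hc : ∀ i, IsCentral (c i))
    (hdisj : Pairwise (Disjoint on c)) {s : ι → L} (hs : ∀ i, s i ≤ c i) (i : ι) :
    (⨆ j, s j) ⊓ c i = s i := by
  obtain ⟨b, hcb⟩ := (hc i).exists_isCompl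
  have hle_compl : ∀ j, j ≠ i → c j ≤ b := fun j hji => by
    rw [(hc i).1.eq_inf_sup_inf hcb (c j), disjoint_iff.1 (hdisj hji), bot_sup_eq]
    exact inf_le_right
  have hsup : (⨆ j, s j) ≤ s i ⊔ b := iSup_le fun j => by
    by_cases hji : j = i
    · exact hji ▸ le_sup_left
    · exact le_sup_of_le_right ((hs j).trans (hle_compl j hji))
  refine le_antisymm ?_ (le_inf (le_iSup s i) (hs i))
  calc (⨆ j, s j) ⊓ c i ≤ c i ⊓ (s i ⊔ b) := by rw [inf_comm]; exact inf_le_inf_left _ hsup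
    _ = s i := by rw [(hc i).1.inf_sup_of_le (hs i), hcb.inf_eq_bot, sup_bot_eq]

def orderIsoPiIic {ι : Type*} (c : ι → L) (hc : ∀ i, IsCentral (c i))
    (hdisj : Pairwise (Disjoint on c)) (hcover : ∀ x, x = ⨆ i, x ⊓ c i) :
    L ≃o ∀ i, Set.Iic (c i) where
  toFun x i := ⟨x ⊓ c i, inf_le_right⟩
  invFun s := ⨆ i, (s i : L)
  left_inv x := (hcover x).symm
  right_inv s := funext fun i => Subtype.ext <|
    iSup_inf_eq_of_isCentral hc hdisj (fun j => (s j).2) i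
  map_rel_iff' {x y} := by
    refine ⟨fun h => ?_, fun h i => inf_le_inf_right _ h⟩
    rw [hcover x, hcover y]
    exact iSup_mono h

lemma SupIrred.exists_isCenterAtom_ge
    (hInf : ∀ S : Set L, (∀ a ∈ S, IsCentral a) → IsCentral (sInf S))
    {p : L} (hp : SupIrred p) : ∃ c, IsCenterAtom c ∧ p ≤ c := by
  let S := {b : L | IsCentral b ∧ p ≤ b}
  let c := sInf S
  have hc : IsCentral c := hInf S fun _ hb => hb.1
  have hpc : p ≤ c := le_sInf fun _ hb => hb.2
  have hc_ne : c ≠ ⊥ := fun h => hp.not_isMin (le_bot_iff.1 (h ▸ hpc) ▸ isMin_bot)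
  refine ⟨c, ⟨hc, hc_ne, fun b hb hbc => ?_⟩, hpc⟩
  obtain ⟨b', hbb'⟩ := hb.exists_isCompl
  rcases hp.2 (hb.1.eq_inf_sup_inf hbb' p).symm with h | h
  · exact absurd (sInf_le (show b ∈ S from ⟨hb, inf_eq_left.1 h⟩)) hbc.not_ge
  · have hcb' : c ≤ b' := sInf_le (show b' ∈ S from ⟨hbb'.isCentral_right hb, inf_eq_left.1 h⟩)
    exact le_bot_iff.1 (hbb'.inf_eq_bot ▸ le_inf le_rfl (hbc.le.trans hcb'))

lemma eq_iSup_inf_isCenterAtom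
    (hFS : ∀ x : L, x = sSup {p : L | SupIrred p ∧ p ≤ x})
    (hInf : ∀ S : Set L, (∀ a ∈ S, IsCentral a) → IsCentral (sInf S)) (x : L) :
    x = ⨆ c : {c : L // IsCenterAtom c}, x ⊓ c := by
  refine le_antisymm ?_ (iSup_le fun _ => inf_le_left)
  conv_lhs => rw [hFS x]
  refine sSup_le fun p ⟨hp, hpx⟩ => ?_
  obtain ⟨c, hc, hpc⟩ := hp.exists_isCenterAtom_ge hInf
  exact (le_inf hpx hpc).trans (le_iSup (fun c : {c : L // IsCenterAtom c} => _ ⊓ c.1) ⟨c, hc⟩)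

end Complete

theorem totallyDecomposable_of_finitelySpatial_general {L : Type u} [CompleteLattice L]
    (hFS : ∀ x : L, x = sSup {p : L | SupIrred p ∧ p ≤ x})
    (hCpl : ∀ S : Set L, (∀ a ∈ S, IsCentral a) → IsCentral (sSup S) ∧ IsCentral (sInf S)) :
    TotallyDecomposable L := by
  have hInf : ∀ S : Set L, (∀ a ∈ S, IsCentral a) → IsCentral (sInf S) :=
    fun S hS => (hCpl S hS).2
  let c : {c : L // IsCenterAtom c} → L := Subtype.val
  have hdisj : Pairwise (Disjoint on c) := fun i j hij => by
    have hij_central : IsCentral (c i ⊓ c j) := by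
      simpa using hInf {c i, c j} (by rintro _ (rfl | rfl); exacts [i.2.1, j.2.1])
    exact i.2.disjoint j.2 (Subtype.coe_ne_coe.2 hij) hij_central
  refine ⟨_, fun i => BddLat.of (Set.Iic (c i)), fun i => ?_,
    ⟨orderIsoPiIic c (fun i => i.2.1) hdisj (eq_iSup_inf_isCenterAtom hFS hInf)⟩⟩
  exact directlyIndecomposable_of_isCentral fun _ => i.2.eq_bot_or_eq_top_of_isCentral

/-- A finitely spatial complete lattice whose center is a complete atomistic
sublattice is totally decomposable. -/
theorem totallyDecomposable_of_finitelySpatial {L : Type u} [CompleteLattice L]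
    (hFS : ∀ x : L, x = sSup {p : L | SupIrred p ∧ p ≤ x})
    (hCpl : ∀ S : Set L, (∀ a ∈ S, IsCentral a) → IsCentral (sSup S) ∧ IsCentral (sInf S))
    (hAtic : ∀ a : L, IsCentral a → a = sSup {u : L | IsCenterAtom u ∧ u ≤ a}) :
    TotallyDecomposable L :=
  totallyDecomposable_of_finitelySpatial_general hFS hCpl
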